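/- Equal total flows for type-averaged games: consider an atomic splittable routing game on parallel edges with valid type set T = (P₁, …, P_T), meaning that in the equilibrium flow f all players within the same part P_t have the same support. Let Γ^T be the modified game where each player in P_t has demand (∑_{i∈P_t} v_i)/|P_t|, and let g be its equilibrium flow (in which, assume, players within the same part still share a common support). Then on every edge e, the total flows agree: f_e = g_e. -/
import Mathlib

/-- The derivative of a strictly monotone convex differentiable function is positive. -/
lemma aux_deriv_pos (l : ℝ → ℝ) (hm : StrictMono l) (hc : ConvexOn ℝ Set.univ l)
    (hd : Differentiable ℝ l) (x : ℝ) : 0 < deriv l x := by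
  have hslope : slope l (x - 1) x ≤ deriv l x :=
    hc.slope_le_deriv (Set.mem_univ _) (Set.mem_univ _) (by linarith) (hd x)
  have h1 : l (x - 1) < l x := hm (by linarith)
  have h2 : (0 : ℝ) < slope l (x - 1) x := by
    rw [slope_def_field]
    apply div_pos <;> linarith
  linarith

/-- The derivative of a convex differentiable function is monotone. -/
lemma aux_deriv_mono (l : ℝ → ℝ) (hc : ConvexOn ℝ Set.univ l)
    (hd : Differentiable ℝ l) : Monotone (deriv l) := fun x y hxy =>
  hc.monotoneOn_deriv (fun z _ => hd z)
    (Set.mem_univ x) (Set.mem_univ y) hxy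

/-- Lemma 4.2: on parallel edges, replacing the players of each type (players sharing
a common support at equilibrium) by players with the averaged demand does not change
the total equilibrium flow on any edge. -/
theorem type_averaged_total_flows
    (m n T : ℕ) (l : Fin m → ℝ → ℝ)
    (hl_mono : ∀ e, StrictMono (l e))
    (hl_conv : ∀ e, ConvexOn ℝ Set.univ (l e))
    (hl_diff : ∀ e, Differentiable ℝ (l e))
    (L : (Fin m → Fin n → ℝ) → Fin m → Fin n → ℝ)
    (hL : ∀ f e i, L f e i =
      l e (∑ j, f e j) + f e i * deriv (l e) (∑ j, f e j))
    -- type assignment: players of the same type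
    (τ : Fin n → Fin T)
    (v : Fin n → ℝ) (hv : ∀ i, 0 < v i)
    -- averaged demands
    (v' : Fin n → ℝ)
    (hv' : ∀ i, v' i =
      (∑ j ∈ Finset.univ.filter (fun j => τ j = τ i), v j) /
        (Finset.univ.filter (fun j => τ j = τ i)).card)
    (f g : Fin m → Fin n → ℝ)
    -- f is an equilibrium flow for demands v
    (hf_nonneg : ∀ e i, 0 ≤ f e i) (hfv : ∀ i, ∑ e, f e i = v i)
    (hfeq : ∀ (i : Fin n) (e e' : Fin m), 0 < f e i → L f e i ≤ L f e' i)
    -- g is an equilibrium flow for the averaged demands v'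
    (hg_nonneg : ∀ e i, 0 ≤ g e i) (hgv : ∀ i, ∑ e, g e i = v' i)
    (hgeq : ∀ (i : Fin n) (e e' : Fin m), 0 < g e i → L g e i ≤ L g e' i)
    -- the type set is valid: players of a common type share a support, in f and in g
    (hfsupp : ∀ i j, τ i = τ j → ∀ e, (0 < f e i ↔ 0 < f e j))
    (hgsupp : ∀ i j, τ i = τ j → ∀ e, (0 < g e i ↔ 0 < g e j)) :
    ∀ e, (∑ i, f e i) = ∑ i, g e i := by
  classical
  by_contra hne
  push_neg at hne
  obtain ⟨e0, he0⟩ := hne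
  -- per-type demand equality
  have htype : ∀ t : Fin T,
      ∑ i ∈ Finset.univ.filter (fun i => τ i = t), v' i
        = ∑ i ∈ Finset.univ.filter (fun i => τ i = t), v i := by
    intro t
    rcases (Finset.univ.filter (fun i => τ i = t)).eq_empty_or_nonempty with h | h
    · simp [h]
    · have hconst : ∀ i ∈ Finset.univ.filter (fun i => τ i = t),
          v' i = (∑ j ∈ Finset.univ.filter (fun j => τ j = t), v j)
            / ((Finset.univ.filter (fun j => τ j = t)).card : ℝ) := by
        intro i hi
        have hti : τ i = t := (Finset.mem_filter.1 hi).2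
        rw [hv' i, hti]
      rw [Finset.sum_congr rfl hconst, Finset.sum_const, nsmul_eq_mul,
        mul_div_cancel₀]
      exact_mod_cast Finset.card_ne_zero_of_mem h.choose_spec
  -- total demands are equal
  have hvtot : ∑ i, v' i = ∑ i, v i := by
    rw [← Finset.sum_fiberwise Finset.univ τ v', ← Finset.sum_fiberwise Finset.univ τ v]
    exact Finset.sum_congr rfl fun t _ => htype t
  -- total flows are equal
  have htot : ∑ e, ∑ i, f e i = ∑ e, ∑ i, g e i := by
    calc ∑ e, ∑ i, f e i = ∑ i, ∑ e, f e i := Finset.sum_comm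
      _ = ∑ i, v i := Finset.sum_congr rfl fun i _ => hfv i
      _ = ∑ i, v' i := hvtot.symm
      _ = ∑ i, ∑ e, g e i := (Finset.sum_congr rfl fun i _ => hgv i).symm
      _ = ∑ e, ∑ i, g e i := Finset.sum_comm
  -- E⁺ is nonempty
  have hEpos : (Finset.univ.filter (fun e => ∑ i, g e i < ∑ i, f e i)).Nonempty := by
    rcases lt_or_gt_of_ne he0 with h | h
    · by_contra hemp
      rw [Finset.not_nonempty_iff_eq_empty, Finset.filter_eq_empty_iff] at hemp
      have : ∑ e, ∑ i, f e i < ∑ e, ∑ i, g e i :=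
        Finset.sum_lt_sum (fun e _ => not_lt.1 (hemp (Finset.mem_univ e)))
          ⟨e0, Finset.mem_univ e0, h⟩
      exact absurd htot this.ne
    · exact ⟨e0, Finset.mem_filter.2 ⟨Finset.mem_univ e0, h⟩⟩
  set Ep : Finset (Fin m) := Finset.univ.filter (fun e => ∑ i, g e i < ∑ i, f e i)
    with hEp
  have hEsum : ∑ e ∈ Ep, ∑ i, g e i < ∑ e ∈ Ep, ∑ i, f e i :=
    Finset.sum_lt_sum_of_nonempty hEpos fun e he => (Finset.mem_filter.1 he).2
  -- pick a type with strictly more flow on Ep in f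
  obtain ⟨t, ht⟩ : ∃ t : Fin T,
      ∑ i ∈ Finset.univ.filter (fun i => τ i = t), ∑ e ∈ Ep, g e i
        < ∑ i ∈ Finset.univ.filter (fun i => τ i = t), ∑ e ∈ Ep, f e i := by
    by_contra hall
    push_neg at hall
    have h1 : ∑ t : Fin T, ∑ i ∈ Finset.univ.filter (fun i => τ i = t), ∑ e ∈ Ep, f e i
        ≤ ∑ t : Fin T, ∑ i ∈ Finset.univ.filter (fun i => τ i = t), ∑ e ∈ Ep, g e i :=
      Finset.sum_le_sum fun t _ => hall t
    rw [Finset.sum_fiberwise, Finset.sum_fiberwise] at h1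
    have c1 : ∑ e ∈ Ep, ∑ i, f e i = ∑ i, ∑ e ∈ Ep, f e i := Finset.sum_comm
    have c2 : ∑ e ∈ Ep, ∑ i, g e i = ∑ i, ∑ e ∈ Ep, g e i := Finset.sum_comm
    rw [c1, c2] at hEsum
    exact absurd hEsum (not_lt.2 h1)
  set Pt : Finset (Fin n) := Finset.univ.filter (fun i => τ i = t) with hPt
  have htc : ∀ i ∈ Pt, τ i = t := fun i hi => (Finset.mem_filter.1 hi).2
  -- pick an edge in Ep where the type's flow strictly increased
  have ht' : ∑ e ∈ Ep, ∑ i ∈ Pt, g e i < ∑ e ∈ Ep, ∑ i ∈ Pt, f e i := by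
    have c1 : ∑ e ∈ Ep, ∑ i ∈ Pt, g e i = ∑ i ∈ Pt, ∑ e ∈ Ep, g e i := Finset.sum_comm
    have c2 : ∑ e ∈ Ep, ∑ i ∈ Pt, f e i = ∑ i ∈ Pt, ∑ e ∈ Ep, f e i := Finset.sum_comm
    rw [c1, c2]; exact ht
  obtain ⟨ep, hepE, hep⟩ := Finset.exists_lt_of_sum_lt ht'
  have hFGp : ∑ i, g ep i < ∑ i, f ep i := (Finset.mem_filter.1 hepE).2
  -- all of Pt use ep in f
  obtain ⟨i0, hi0m, hi0⟩ := Finset.exists_lt_of_sum_lt hep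
  have hi0pos : 0 < f ep i0 := lt_of_le_of_lt (hg_nonneg ep i0) hi0
  have hfP : ∀ i ∈ Pt, 0 < f ep i := fun i hi =>
    (hfsupp i0 i (by rw [htc i0 hi0m, htc i hi]) ep).1 hi0pos
  have hPtne : Pt.Nonempty := ⟨i0, hi0m⟩
  -- flow conservation for type t
  have hconsf : ∑ e, ∑ i ∈ Pt, f e i = ∑ i ∈ Pt, v i := by
    rw [Finset.sum_comm]
    exact Finset.sum_congr rfl fun i _ => hfv i
  have hconsg : ∑ e, ∑ i ∈ Pt, g e i = ∑ i ∈ Pt, v i := by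
    rw [Finset.sum_comm]
    calc ∑ i ∈ Pt, ∑ e, g e i = ∑ i ∈ Pt, v' i :=
          Finset.sum_congr rfl fun i _ => hgv i
      _ = ∑ i ∈ Pt, v i := htype t
  -- find an edge outside Ep where the type's flow strictly decreased
  have hsplitf := Finset.sum_filter_add_sum_filter_not Finset.univ
    (fun e => ∑ i, g e i < ∑ i, f e i) (fun e => ∑ i ∈ Pt, f e i)
  have hsplitg := Finset.sum_filter_add_sum_filter_not Finset.univ
    (fun e => ∑ i, g e i < ∑ i, f e i) (fun e => ∑ i ∈ Pt, g e i)
  have hneg : ∑ e ∈ Finset.univ.filter (fun e => ¬ ∑ i, g e i < ∑ i, f e i),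
      ∑ i ∈ Pt, f e i
      < ∑ e ∈ Finset.univ.filter (fun e => ¬ ∑ i, g e i < ∑ i, f e i),
      ∑ i ∈ Pt, g e i := by
    have h1 := ht'
    rw [hconsf] at hsplitf
    rw [hconsg] at hsplitg
    rw [hEp] at h1
    linarith
  obtain ⟨en, henE, hen⟩ := Finset.exists_lt_of_sum_lt hneg
  have hFGn : ∑ i, f en i ≤ ∑ i, g en i := not_lt.1 (Finset.mem_filter.1 henE).2
  -- all of Pt use en in g
  obtain ⟨j0, hj0m, hj0⟩ := Finset.exists_lt_of_sum_lt hen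
  have hj0pos : 0 < g en j0 := lt_of_le_of_lt (hf_nonneg en j0) hj0
  have hgP : ∀ i ∈ Pt, 0 < g en i := fun i hi =>
    (hgsupp j0 i (by rw [htc j0 hj0m, htc i hi]) en).1 hj0pos
  -- sums of marginal costs over Pt
  have hLsum : ∀ (h : Fin m → Fin n → ℝ) (Lh : (Fin m → Fin n → ℝ) → Fin m → Fin n → ℝ)
      (hLh : ∀ f e i, Lh f e i = l e (∑ j, f e j) + f e i * deriv (l e) (∑ j, f e j))
      (e : Fin m), ∑ i ∈ Pt, Lh h e i
        = (Pt.card : ℝ) * l e (∑ j, h e j)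
          + (∑ i ∈ Pt, h e i) * deriv (l e) (∑ j, h e j) := by
    intro h Lh hLh e
    rw [Finset.sum_congr rfl fun i _ => hLh h e i, Finset.sum_add_distrib,
      Finset.sum_const, nsmul_eq_mul, ← Finset.sum_mul]
  have dpos : ∀ e x, 0 < deriv (l e) x := fun e x =>
    aux_deriv_pos (l e) (hl_mono e) (hl_conv e) (hl_diff e) x
  have dmono : ∀ e, Monotone (deriv (l e)) := fun e =>
    aux_deriv_mono (l e) (hl_conv e) (hl_diff e)
  have hk1 : (1 : ℝ) ≤ (Pt.card : ℝ) := by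
    exact_mod_cast Finset.card_pos.2 hPtne
  -- A < B : ∑ L g ep < ∑ L f ep
  have hAB : ∑ i ∈ Pt, L g ep i < ∑ i ∈ Pt, L f ep i := by
    rw [hLsum g L hL ep, hLsum f L hL ep]
    have h1 : l ep (∑ j, g ep j) < l ep (∑ j, f ep j) := hl_mono ep hFGp
    have h2 : deriv (l ep) (∑ j, g ep j) ≤ deriv (l ep) (∑ j, f ep j) :=
      dmono ep hFGp.le
    have h3 : 0 < deriv (l ep) (∑ j, g ep j) := dpos ep _
    have h4 : 0 ≤ ∑ i ∈ Pt, g ep i := Finset.sum_nonneg fun i _ => hg_nonneg ep i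
    nlinarith [hep, hk1, h4]
  -- C < D : ∑ L f en < ∑ L g en
  have hCD : ∑ i ∈ Pt, L f en i < ∑ i ∈ Pt, L g en i := by
    rw [hLsum g L hL en, hLsum f L hL en]
    have h1 : l en (∑ j, f en j) ≤ l en (∑ j, g en j) := (hl_mono en).le_iff_le.2 hFGn
    have h2 : deriv (l en) (∑ j, f en j) ≤ deriv (l en) (∑ j, g en j) :=
      dmono en hFGn
    have h3 : 0 < deriv (l en) (∑ j, g en j) := dpos en _
    have h4 : 0 ≤ ∑ i ∈ Pt, f en i := Finset.sum_nonneg fun i _ => hf_nonneg en i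
    nlinarith [hen, hk1, h4]
  -- D ≤ A and B ≤ C by the equilibrium conditions
  have hDA : ∑ i ∈ Pt, L g en i ≤ ∑ i ∈ Pt, L g ep i :=
    Finset.sum_le_sum fun i hi => hgeq i en ep (hgP i hi)
  have hBC : ∑ i ∈ Pt, L f ep i ≤ ∑ i ∈ Pt, L f en i :=
    Finset.sum_le_sum fun i hi => hfeq i ep en (hfP i hi)
  linarith
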